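/- arXiv:2503.10495 — 2 statements merged into one kernel-verified Lean document; each statement's English description precedes it below -/
import Mathlib

section
/- Let h ∈ (0,1) and set λ̄ := h^{1/3}/√3. Then for every λ ∈ (0, λ̄] and every r ∈ ℝ one has F_λ''(r) ≥ 3·h^{1/3} − 2 − h; equivalently, F_λ''(r) + a ≥ 0 for every a ≥ c₀ := 2 + h − 3·h^{1/3}. -/
/-!
The second derivative is computed piecewise, `F_λ'' = F_{1,λ}'' + F̄₂''`. With `t = h^{1/3}` it is
`-6r/λ - 2r ≥ 0` for `r < 0`, `t³/s² + 2s - 2 - t³` with `s = 1 - r` on `[0, 1-λ)`, and at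
least `t³/λ² - 2 - t³` beyond `1 - λ`. AM-GM for `t³/s², s, s` gives `t³/s² + 2s ≥ 3t` (with
`s = 1` it also makes the bound `≤ 0`), and `λ ≤ t/√3` is exactly what makes `t³/λ² ≥ 3t`.
-/

/-- Convex singular part `F_{1,λ}` of the regularized Lennard--Jones potential. -/
noncomputable def F1reg (h l r : ℝ) : ℝ :=
  if r < 0 then -r^3/l + h/2 * r^2 + h*r
  else if r < 1 - l then -h * Real.log (1 - r)
  else -h * Real.log l + 3*h/2 - 2*h/l * (1 - r) + h/(2*l^2) * (1 - r)^2

/-- Non-convex regular part `F̄₂` of the regularized Lennard--Jones potential. -/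
noncomputable def F2reg (h r : ℝ) : ℝ :=
  if r < 1 then -r^3/3 - h*(r^2/2 + r)
  else -1/3 - 3*h/2 - (1 + 2*h)*(r - 1) - (2 + h)/2 * (r - 1)^2

/-- The regularized potential `F_λ = F_{1,λ} + F̄₂`. -/
noncomputable def Freg (h l r : ℝ) : ℝ := F1reg h l r + F2reg h r

open Set

theorem hasDerivAt_ite_lt {F : Type*} [NormedAddCommGroup F] [NormedSpace ℝ F]
    {g k g' k' : ℝ → F} {p x : ℝ}
    (hg : x ≤ p → HasDerivAt g (g' x) x) (hk : p ≤ x → HasDerivAt k (k' x) x)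
    (hval : g p = k p) (hder : g' p = k' p) :
    HasDerivAt (fun y => if y < p then g y else k y) (if x < p then g' x else k' x) x := by
  rcases lt_trichotomy x p with hx | rfl | hx
  · rw [if_pos hx]
    exact (hg hx.le).congr_of_eventuallyEq <| (eventually_lt_nhds hx).mono fun y hy => if_pos hy
  · rw [if_neg (lt_irrefl x), ← hasDerivWithinAt_univ, ← Iic_union_Ici]
    refine HasDerivWithinAt.union ?_ ?_
    · refine ((hg le_rfl).hasDerivWithinAt.congr_of_mem (fun y hy => ?_) self_mem_Iic).congr_deriv
        hder
      rcases (show y ≤ _ from hy).lt_or_eq with hy | rfl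
      · exact if_pos hy
      · rw [if_neg (lt_irrefl y), hval]
    · exact (hk le_rfl).hasDerivWithinAt.congr_of_mem (fun y hy => if_neg (not_lt.2 hy))
        self_mem_Ici
  · rw [if_neg hx.not_gt]
    exact (hk hx.le).congr_of_eventuallyEq <|
      (eventually_gt_nhds hx).mono fun y hy => if_neg (not_lt.2 hy.le)

noncomputable def F1reg' (h l r : ℝ) : ℝ :=
  if r < 0 then -3 * r^2 / l + h * r + h
  else if r < 1 - l then h / (1 - r)
  else 2 * h / l - h / l^2 * (1 - r)

noncomputable def F1reg'' (h l r : ℝ) : ℝ :=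
  if r < 0 then -6 * r / l + h
  else if r < 1 - l then h / (1 - r)^2
  else h / l^2

noncomputable def F2reg' (h r : ℝ) : ℝ :=
  if r < 1 then -r^2 - h * (r + 1) else -(1 + 2 * h) - (2 + h) * (r - 1)

noncomputable def F2reg'' (h r : ℝ) : ℝ :=
  if r < 1 then -2 * r - h else -(2 + h)

section
variable {h l : ℝ}

theorem hasDerivAt_F1reg (hl0 : 0 < l) (hl1 : l < 1) (r : ℝ) :
    HasDerivAt (F1reg h l) (F1reg' h l r) r := by
  have h1l : 0 < 1 - l := by linarith
  apply hasDerivAt_ite_lt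
  · intro _
    exact (((hasDerivAt_pow 3 r).neg.div_const l).add ((hasDerivAt_pow 2 r).const_mul (h / 2))).add
      ((hasDerivAt_id' r).const_mul h) |>.congr_deriv (by push_cast; ring)
  · intro _
    apply hasDerivAt_ite_lt
    · intro hr
      exact (((hasDerivAt_id' r).const_sub 1).log (by linarith)).const_mul (-h)
        |>.congr_deriv (by field_simp)
    · intro _
      have h1r := (hasDerivAt_id' r).const_sub 1
      exact ((hasDerivAt_const r (-h * Real.log l + 3 * h / 2)).sub (h1r.const_mul (2 * h / l))).add
        ((h1r.pow 2).const_mul (h / (2 * l ^ 2))) |>.congr_deriv (by field_simp; ring)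
    · simp only [sub_sub_cancel]; field_simp; ring
    · simp only [sub_sub_cancel]; field_simp; ring
  · simp [h1l]
  · simp [h1l]

theorem hasDerivAt_F1reg' (hl0 : 0 < l) (hl1 : l < 1) (r : ℝ) :
    HasDerivAt (F1reg' h l) (F1reg'' h l r) r := by
  have h1l : 0 < 1 - l := by linarith
  apply hasDerivAt_ite_lt
  · intro _
    exact ((((hasDerivAt_pow 2 r).const_mul (-3)).div_const l).add
      ((hasDerivAt_id' r).const_mul h)).add_const h |>.congr_deriv (by push_cast; ring)
  · intro _
    apply hasDerivAt_ite_lt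
    · intro hr
      exact ((hasDerivAt_id' r).const_sub 1).inv (by linarith) |>.const_mul h
        |>.congr_deriv (by field_simp)
    · intro _
      exact (hasDerivAt_const r (2 * h / l)).sub
        (((hasDerivAt_id' r).const_sub 1).const_mul (h / l ^ 2)) |>.congr_deriv (by ring)
    · simp only [sub_sub_cancel]; field_simp; ring
    · simp only [sub_sub_cancel]
  · simp [h1l]
  · simp [h1l]

theorem hasDerivAt_F2reg (r : ℝ) : HasDerivAt (F2reg h) (F2reg' h r) r := by
  apply hasDerivAt_ite_lt
  · intro _
    exact ((hasDerivAt_pow 3 r).neg.div_const 3).sub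
      ((((hasDerivAt_pow 2 r).div_const 2).add (hasDerivAt_id' r)).const_mul h)
      |>.congr_deriv (by push_cast; ring)
  · intro _
    have hr1 := (hasDerivAt_id' r).sub_const 1
    exact ((hasDerivAt_const r (-1 / 3 - 3 * h / 2)).sub (hr1.const_mul (1 + 2 * h))).sub
      ((hr1.pow 2).const_mul ((2 + h) / 2)) |>.congr_deriv (by ring)
  · ring
  · ring

theorem hasDerivAt_F2reg' (r : ℝ) : HasDerivAt (F2reg' h) (F2reg'' h r) r := by
  apply hasDerivAt_ite_lt
  · intro _
    exact (hasDerivAt_pow 2 r).neg.sub (((hasDerivAt_id' r).add_const 1).const_mul h)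
      |>.congr_deriv (by push_cast; ring)
  · intro _
    exact (hasDerivAt_const r (-(1 + 2 * h))).sub
      (((hasDerivAt_id' r).sub_const 1).const_mul (2 + h)) |>.congr_deriv (by ring)
  · ring
  · ring

theorem deriv_deriv_Freg (hl0 : 0 < l) (hl1 : l < 1) (r : ℝ) :
    deriv (deriv (Freg h l)) r = F1reg'' h l r + F2reg'' h r := by
  have hderiv : deriv (Freg h l) = fun x => F1reg' h l x + F2reg' h x :=
    funext fun x => ((hasDerivAt_F1reg hl0 hl1 x).add (hasDerivAt_F2reg x)).deriv
  rw [hderiv]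
  exact ((hasDerivAt_F1reg' hl0 hl1 r).add (hasDerivAt_F2reg' r)).deriv

end

theorem three_mul_le_cube_div_sq_add_two_mul {t s : ℝ} (ht : 0 ≤ t) (hs : 0 < s) :
    3 * t ≤ t ^ 3 / s ^ 2 + 2 * s := by
  rw [← sub_nonneg]
  have key : t ^ 3 / s ^ 2 + 2 * s - 3 * t = (t - s) ^ 2 * (t + 2 * s) / s ^ 2 := by
    field_simp; ring
  rw [key]
  positivity

theorem sub_le_F1reg''_add_F2reg'' {t l : ℝ} (ht : 0 ≤ t) (hl : 0 < l)
    (hl_sq : 3 * l ^ 2 ≤ t ^ 2) (r : ℝ) :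
    3 * t - 2 - t ^ 3 ≤ F1reg'' (t ^ 3) l r + F2reg'' (t ^ 3) r := by
  have hcube_two : 3 * t ≤ t ^ 3 + 2 := by
    simpa using three_mul_le_cube_div_sq_add_two_mul ht one_pos
  have hcap : 3 * t ≤ t ^ 3 / l ^ 2 := by
    rw [le_div_iff₀ (by positivity)]
    nlinarith
  unfold F1reg'' F2reg''
  split_ifs with hneg hmid hlt1 hlt1'
  · have : 0 ≤ -6 * r / l := div_nonneg (by linarith) hl.le
    linarith
  · linarith
  · linarith [three_mul_le_cube_div_sq_add_two_mul ht (show 0 < 1 - r by linarith)]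
  · linarith
  · linarith
  · linarith

theorem three_mul_sq_le_of_le_div_sqrt_three {l t : ℝ} (hl : 0 ≤ l) (hlt : l ≤ t / √3) :
    3 * l ^ 2 ≤ t ^ 2 := by
  have hs : l * √3 ≤ t := (le_div_iff₀ (by positivity)).mp hlt
  calc 3 * l ^ 2 = (l * √3) ^ 2 := by rw [mul_pow, Real.sq_sqrt (by norm_num)]; ring
    _ ≤ t ^ 2 := pow_le_pow_left₀ (by positivity) hs 2

/-- With `λ̄ := h^{1/3}/√3`, for all `λ ∈ (0,λ̄]` and all `r ∈ ℝ` one has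
`F_λ''(r) ≥ 3 h^{1/3} - 2 - h`; equivalently `F_λ''(r) + a ≥ 0` for all `a ≥ c₀`. -/
theorem Freg_second_derivative_lower_bound (h : ℝ) (hh : h ∈ Set.Ioo (0:ℝ) 1) :
    ∀ l ∈ Set.Ioc (0:ℝ) (h ^ ((1:ℝ)/3) / Real.sqrt 3), ∀ r : ℝ,
      3 * h ^ ((1:ℝ)/3) - 2 - h ≤ deriv (deriv (Freg h l)) r ∧
      (∀ a : ℝ, 2 + h - 3 * h ^ ((1:ℝ)/3) ≤ a → 0 ≤ deriv (deriv (Freg h l)) r + a) := by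
  rintro l ⟨hl0, hlt⟩ r
  have hcube : (h ^ ((1:ℝ)/3)) ^ 3 = h := by
    rw [one_div, ← Nat.cast_ofNat, Real.rpow_inv_natCast_pow hh.1.le three_ne_zero]
  have ht0 : 0 ≤ h ^ ((1:ℝ)/3) := Real.rpow_nonneg hh.1.le _
  set t := h ^ ((1:ℝ)/3)
  have ht1 : t < 1 := Real.rpow_lt_one hh.1.le hh.2 (by norm_num)
  have hl_sq := three_mul_sq_le_of_le_div_sqrt_three hl0.le hlt
  have hl1 : l < 1 := by nlinarith
  have hbound := sub_le_F1reg''_add_F2reg'' ht0 hl0 hl_sq r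
  rw [hcube] at hbound
  rw [deriv_deriv_Freg hl0 hl1]
  exact ⟨hbound, fun a ha => by linarith⟩
end

section
/- Let h ∈ (0,1). For every ε ∈ (0, 1/2) there exist constants C₁ > 0, C₂ > 0 and λ̄ ∈ (0,1), depending only on ε and h, such that for all λ ∈ (0, λ̄], all r ∈ ℝ and all r₀ ∈ [ε, 1−ε], one has |F_λ'(r)| ≤ C₁·F_λ'(r)·(r − r₀) + C₂. -/
theorem hasDerivAt_ite_lt_s14 {f g f' g' : ℝ → ℝ} {c : ℝ}
    (hf : ∀ x ≤ c, HasDerivAt f (f' x) x) (hg : ∀ x ≥ c, HasDerivAt g (g' x) x)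
    (hfg : f c = g c) (hfg' : f' c = g' c) (x : ℝ) :
    HasDerivAt (fun r => if r < c then f r else g r) (if x < c then f' x else g' x) x := by
  rcases lt_trichotomy x c with hx | rfl | hx
  · rw [if_pos hx]
    refine (hf x hx.le).congr_of_eventuallyEq ?_
    filter_upwards [Iio_mem_nhds hx] with r hr
    exact if_pos hr
  · have hleft : HasDerivWithinAt (fun r => if r < x then f r else g r) (f' x) (Set.Iic x) x :=
      (hf x le_rfl).hasDerivWithinAt.congr
        (fun r hr => by rcases (Set.mem_Iic.mp hr).lt_or_eq with hr | rfl <;> simp [*])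
        (by simp [hfg])
    have hright : HasDerivWithinAt (fun r => if r < x then f r else g r) (f' x) (Set.Ici x) x :=
      hfg' ▸ (hg x le_rfl).hasDerivWithinAt.congr
        (fun r hr => if_neg (not_lt.2 (Set.mem_Ici.mp hr))) (by simp)
    rw [if_neg (lt_irrefl x), ← hfg']
    exact (hleft.union hright).hasDerivAt (by rw [Set.Iic_union_Ici]; exact Filter.univ_mem)
  · rw [if_neg hx.not_gt]
    refine (hg x hx.le).congr_of_eventuallyEq ?_
    filter_upwards [Ioi_mem_nhds hx] with r hr
    exact if_neg (not_lt.2 hr.le)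

theorem abs_le_inv_mul_mul_add {d t a c : ℝ} (ha : 0 < a) (hat : a ≤ |t|) (hdt : 0 ≤ d * t)
    (hc : 0 ≤ c) : |d| ≤ a⁻¹ * (d * t) + c := by
  have : |d| * a ≤ d * t := by
    calc |d| * a ≤ |d| * |t| := mul_le_mul_of_nonneg_left hat (abs_nonneg d)
      _ = d * t := by rw [← abs_mul, abs_of_nonneg hdt]
  have : |d| ≤ d * t / a := (le_div_iff₀ ha).mpr this
  rw [inv_mul_eq_div]
  linarith

theorem abs_le_mul_mul_add_of_abs_le {d t M C : ℝ} (hd : |d| ≤ M) (ht : |t| ≤ 1) (hC : 0 ≤ C) :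
    |d| ≤ C * (d * t) + (C * M + M) := by
  have : -M ≤ d * t := by
    have := neg_abs_le (d * t)
    rw [abs_mul] at this
    nlinarith [abs_nonneg d, abs_nonneg t]
  nlinarith

noncomputable def F1regDeriv (h l r : ℝ) : ℝ :=
  if r < 0 then -3*r^2/l + h*r + h
  else if r < 1 - l then h/(1-r)
  else 2*h/l - h/l^2*(1-r)

noncomputable def F2regDeriv (h r : ℝ) : ℝ :=
  if r < 1 then -r^2 - h*(r+1) else -(1+2*h) - (2+h)*(r-1)

theorem hasDerivAt_F1reg_s14 (h : ℝ) {l : ℝ} (hl : 0 < l) (hl1 : l < 1) (x : ℝ) :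
    HasDerivAt (F1reg h l) (F1regDeriv h l x) x := by
  have hl' : (0:ℝ) < 1 - l := by linarith
  have hsub : ∀ x : ℝ, HasDerivAt (fun r : ℝ => 1 - r) (-1) x :=
    fun x => (hasDerivAt_id' x).const_sub 1
  refine hasDerivAt_ite_lt_s14 (f' := fun r => -3*r^2/l + h*r + h)
    (g' := fun r => if r < 1 - l then h/(1-r) else 2*h/l - h/l^2*(1-r))
    (fun x _ => ?_) (fun x _ => hasDerivAt_ite_lt_s14 (f' := fun r => h/(1-r))
      (g' := fun r => 2*h/l - h/l^2*(1-r)) (fun x hx => ?_) (fun x _ => ?_) ?_ ?_ x) ?_ ?_ x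
  · refine ((((hasDerivAt_pow 3 x).fun_neg.div_const l).fun_add
      ((hasDerivAt_pow 2 x).const_mul (h/2))).fun_add
        ((hasDerivAt_id' x).const_mul h)).congr_deriv ?_
    push_cast; ring
  · refine (((hsub x).log (by linarith)).const_mul (-h)).congr_deriv ?_
    field_simp
  · refine ((((hsub x).const_mul (2*h/l)).const_sub _).fun_add
      (((hsub x).fun_pow 2).const_mul (h/(2*l^2)))).congr_deriv ?_
    field_simp; ring
  · rw [sub_sub_cancel]; field_simp; ring
  · rw [sub_sub_cancel]; field_simp; ring
  · simp [hl']
  · simp [hl']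

theorem hasDerivAt_F2reg_s14 (h x : ℝ) : HasDerivAt (F2reg h) (F2regDeriv h x) x := by
  have hsub : ∀ x : ℝ, HasDerivAt (fun r : ℝ => r - 1) 1 x :=
    fun x => (hasDerivAt_id' x).sub_const 1
  refine hasDerivAt_ite_lt_s14 (f' := fun r => -r^2 - h*(r+1))
    (g' := fun r => -(1+2*h) - (2+h)*(r-1)) (fun x _ => ?_) (fun x _ => ?_) ?_ ?_ x
  · refine (((hasDerivAt_pow 3 x).fun_neg.div_const 3).fun_sub
      ((((hasDerivAt_pow 2 x).div_const 2).fun_add (hasDerivAt_id' x)).const_mul h)).congr_deriv ?_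
    push_cast; ring
  · refine ((((hsub x).const_mul (1 + 2*h)).const_sub _).fun_sub
      (((hsub x).fun_pow 2).const_mul ((2+h)/2))).congr_deriv ?_
    push_cast; ring
  · norm_num; ring
  · norm_num; ring

noncomputable def FregDeriv (h l r : ℝ) : ℝ := F1regDeriv h l r + F2regDeriv h r

theorem deriv_Freg (h : ℝ) {l : ℝ} (hl : 0 < l) (hl1 : l < 1) :
    deriv (Freg h l) = FregDeriv h l :=
  funext fun x => ((hasDerivAt_F1reg_s14 h hl hl1 x).add (hasDerivAt_F2reg_s14 h x)).deriv

theorem FregDeriv_nonpos_of_neg {h l r : ℝ} (hl : 0 < l) (hr : r < 0) : FregDeriv h l r ≤ 0 := by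
  have hr1 : r < 1 := by linarith
  simp only [FregDeriv, F1regDeriv, F2regDeriv, if_pos hr, if_pos hr1]
  have : 0 ≤ 3 * r ^ 2 / l := by positivity
  rw [neg_mul, neg_div]
  nlinarith

theorem abs_FregDeriv_le {h l r δ : ℝ} (hh : 0 ≤ h) (hr : 0 ≤ r) (hrl : r < 1 - l)
    (hδ : 0 < δ) (hrδ : δ ≤ 1 - r) : |FregDeriv h l r| ≤ h / δ + 1 + 2 * h := by
  have hr1 : r < 1 := by linarith
  simp only [FregDeriv, F1regDeriv, F2regDeriv, if_neg hr.not_gt, if_pos hrl, if_pos hr1]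
  have hA : h / (1 - r) ≤ h / δ := div_le_div_of_nonneg_left hh hδ hrδ
  have hA0 : 0 ≤ h / (1 - r) := div_nonneg hh (by linarith)
  rw [abs_le]
  constructor <;> nlinarith

theorem FregDeriv_nonneg {h l r : ℝ} (hh0 : 0 < h) (hh1 : h ≤ 1) (hl : 0 < l)
    (hlh : (2 + h) * l ≤ h) (hrh : (2 + h) * (1 - r) ≤ h) : 0 ≤ FregDeriv h l r := by
  have hK : 2 + h ≤ h / l := by rw [le_div_iff₀ hl]; exact hlh
  have hr0 : 0 < r := by nlinarith
  simp only [FregDeriv, F1regDeriv, F2regDeriv, if_neg hr0.not_gt]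
  split_ifs with hrl hr1 hr1
  · have : 2 + h ≤ h / (1 - r) := by rw [le_div_iff₀ (by linarith)]; exact hrh
    nlinarith
  · linarith
  · have : h / l ^ 2 * (1 - r) ≤ h / l := by
      rw [div_mul_eq_mul_div, div_le_div_iff₀ (by positivity) hl]
      nlinarith [mul_le_mul_of_nonneg_left (show 1 - r ≤ l by linarith) (mul_pos hh0 hl).le]
    have : h / l = 2 * h / l - h / l := by ring
    nlinarith
  · have hK2 : 2 + h ≤ h / l ^ 2 := by
      rw [pow_two, ← div_div, le_div_iff₀ hl]; nlinarith
    have : 2 * h / l = 2 * (h / l) := by ring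
    nlinarith [mul_le_mul_of_nonneg_right hK2 (show 0 ≤ r - 1 by linarith)]

/-- Miranville--Zelik-type inequality for the regularized potential: for every
`ε ∈ (0,1/2)` there are `C₁, C₂ > 0` and `λ̄ ∈ (0,1)`, depending only on `ε` and `h`,
such that `|F_λ'(r)| ≤ C₁ F_λ'(r)(r - r₀) + C₂` for all `λ ∈ (0,λ̄]`, `r ∈ ℝ`,
`r₀ ∈ [ε, 1-ε]`. -/
theorem Freg_MZ_inequality (h : ℝ) (hh : h ∈ Set.Ioo (0:ℝ) 1)
    (ε : ℝ) (hε : ε ∈ Set.Ioo (0:ℝ) (1/2)) :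
    ∃ C₁ > (0:ℝ), ∃ C₂ > (0:ℝ), ∃ lb ∈ Set.Ioo (0:ℝ) 1,
      ∀ l ∈ Set.Ioc (0:ℝ) lb, ∀ r : ℝ, ∀ r₀ ∈ Set.Icc ε (1 - ε),
        |deriv (Freg h l) r| ≤ C₁ * (deriv (Freg h l) r * (r - r₀)) + C₂ := by
  obtain ⟨hh0, hh1⟩ := hh
  obtain ⟨hε0, hε1⟩ := hε
  -- `δ ≤ h / (2 + h)` makes the singular part dominate on `[1 - δ, ∞)`,
  -- `δ ≤ ε / 2` keeps `r - r₀ ≥ ε / 2` there.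
  set δ := min (ε / 2) (h / (2 + h))
  have hδ0 : 0 < δ := lt_min (by linarith) (by positivity)
  have hδε : δ ≤ ε / 2 := min_le_left _ _
  have hδh : (2 + h) * δ ≤ h := (le_div_iff₀' (by linarith)).mp (min_le_right _ _)
  have hε2 : 0 < ε / 2 := by linarith
  have hC₂ : 0 < (ε / 2)⁻¹ * (h / δ + 1 + 2 * h) + (h / δ + 1 + 2 * h) := by positivity
  refine ⟨(ε / 2)⁻¹, by positivity, _, hC₂, δ, ⟨hδ0, by linarith⟩, ?_⟩
  rintro l ⟨hl0, hlδ⟩ r r₀ ⟨hr₀, hr₀'⟩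
  rw [deriv_Freg h hl0 (by linarith)]
  rcases lt_or_ge r 0 with hr | hr
  · exact abs_le_inv_mul_mul_add hε2 (le_abs.mpr (Or.inr (by linarith)))
      (mul_nonneg_of_nonpos_of_nonpos (FregDeriv_nonpos_of_neg hl0 hr) (by linarith)) hC₂.le
  rcases lt_or_ge r (1 - δ) with hrδ | hrδ
  · exact abs_le_mul_mul_add_of_abs_le (abs_FregDeriv_le hh0.le hr (by linarith) hδ0 (by linarith))
      (abs_le.mpr ⟨by linarith, by linarith⟩) (by positivity)
  · exact abs_le_inv_mul_mul_add hε2 (le_abs.mpr (Or.inl (by linarith)))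
      (mul_nonneg (FregDeriv_nonneg hh0 hh1.le hl0 (by nlinarith) (by nlinarith)) (by linarith))
      hC₂.le
end
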